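/- arXiv:2407.18636 — 5 statements merged into one kernel-verified Lean document; each statement's English description precedes it below -/
import Mathlib

section
/- Let D be a digraph on n vertices with δ⁰(D) ≥ (2/3 + γ)n where 0 < γ ≤ 1/18. Then for every vertex v of D, the number of ordered 4-tuples (a, b, c, d) of distinct vertices that form an absorber of v (i.e., abcd is a reverse square 4-path absorbing v) is at least 6γ³n⁴, provided n is sufficiently large (e.g., γn ≥ 2). -/
open Finset

/-!
Choose the absorber greedily: `a ∈ N⁺(v)`, `b ∈ N⁺(a) ∩ N⁻(v)`, `c ∈ N⁺(b) ∩ N⁻(a) ∩ N⁺(v)` and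
`d ∈ N⁺(c) ∩ N⁻(b) ∩ N⁻(v)`, each distinct from `v` and the vertices chosen before. Every
neighbourhood has at least `δ ≥ (2/3 + γ)n` vertices, so an intersection of `k` of them has at
least `kδ - (k - 1)n`; with `γn ≥ 2` this leaves at least `2n/3`, `n/3`, `3γn/2` and `γn` choices
at the four steps, and the product `γ²n⁴/3` is at least `6γ³n⁴` because `γ ≤ 1/18`.
-/

namespace ReverseSquarePath

theorem card_sub_le_card_sdiff {α : Type*} [DecidableEq α] (s t : Finset α) :
    (#s : ℝ) - #t ≤ #(s \ t) := by
  have : (#s : ℝ) ≤ #(s \ t) + #t := by exact_mod_cast card_le_card_sdiff_add_card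
  linarith

variable {V : Type*} [Fintype V] [DecidableEq V]

theorem card_add_card_sub_card_le_card_inter (s t : Finset V) :
    (#s : ℝ) + #t - Fintype.card V ≤ #(s ∩ t) := by
  have hsum : (#(s ∪ t) : ℝ) + #(s ∩ t) = #s + #t := by
    exact_mod_cast card_union_add_card_inter s t
  have hunion : (#(s ∪ t) : ℝ) ≤ Fintype.card V := by exact_mod_cast card_le_univ _
  linarith

theorem mul_le_card_sigma {ι : Type*} {κ : ι → Type*} (s : Finset ι) (t : ∀ i, Finset (κ i))
    {x m : ℝ} (hs : x ≤ #s) (hm : 0 ≤ m) (ht : ∀ i ∈ s, m ≤ #(t i)) :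
    x * m ≤ #(s.sigma t) := by
  calc x * m ≤ #s * m := by gcongr
    _ = #s • m := (nsmul_eq_mul _ _).symm
    _ ≤ ∑ i ∈ s, (#(t i) : ℝ) := card_nsmul_le_sum _ _ _ ht
    _ = #(s.sigma t) := by rw [card_sigma]; push_cast; rfl

variable (A : V → V → Prop) [DecidableRel A]

def outNbhd (v : V) : Finset V := univ.filter (A v ·)

def inNbhd (v : V) : Finset V := univ.filter (A · v)

-- Reducible, so that filtering by it uses the decidability instance of the unfolded conjunction.
abbrev IsAbsorber (v : V) (t : V × V × V × V) : Prop :=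
  let a := t.1; let b := t.2.1; let c := t.2.2.1; let d := t.2.2.2
  a ≠ b ∧ a ≠ c ∧ a ≠ d ∧ b ≠ c ∧ b ≠ d ∧ c ≠ d ∧
  v ≠ a ∧ v ≠ b ∧ v ≠ c ∧ v ≠ d ∧
  A a b ∧ A b c ∧ A c d ∧ A c a ∧ A d b ∧
  A v a ∧ A v c ∧ A b v ∧ A d v

def absorberCandidates (v : V) : Finset (Σ _ : V, Σ _ : V, Σ _ : V, V) :=
  (outNbhd A v \ {v}).sigma fun a =>
  ((outNbhd A a ∩ inNbhd A v) \ {v, a}).sigma fun b =>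
  ((outNbhd A b ∩ inNbhd A a ∩ outNbhd A v) \ {v, a, b}).sigma fun c =>
  (outNbhd A c ∩ inNbhd A b ∩ inNbhd A v) \ {v, a, b, c}

theorem isAbsorber_of_mem_absorberCandidates {v : V} {x : Σ _ : V, Σ _ : V, Σ _ : V, V}
    (hx : x ∈ absorberCandidates A v) : IsAbsorber A v (x.1, x.2.1, x.2.2.1, x.2.2.2) := by
  obtain ⟨a, b, c, d⟩ := x
  simp only [absorberCandidates, outNbhd, inNbhd, mem_sigma, mem_sdiff, mem_inter, mem_filter,
    mem_univ, true_and, mem_insert, mem_singleton, not_or] at hx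
  unfold IsAbsorber
  grind

theorem card_absorberCandidates_le (v : V) :
    #(absorberCandidates A v) ≤ #(univ.filter (IsAbsorber A v)) :=
  card_le_card_of_injOn (fun x => (x.1, x.2.1, x.2.2.1, x.2.2.2))
    (fun _ hx => by simpa using isAbsorber_of_mem_absorberCandidates A hx)
    (fun ⟨_, _, _, _⟩ _ ⟨_, _, _, _⟩ _ h => by simp_all)

theorem le_card_absorberCandidates {δ : ℝ} (hout : ∀ u, δ ≤ #(outNbhd A u))
    (hin : ∀ u, δ ≤ #(inNbhd A u)) (hδ : 2 * Fintype.card V + 4 ≤ 3 * δ) (v : V) :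
    (δ - 1) * ((2 * δ - Fintype.card V - 2) *
      ((3 * δ - 2 * Fintype.card V - 3) * (3 * δ - 2 * Fintype.card V - 4))) ≤
      #(absorberCandidates A v) := by
  have hn : (0 : ℝ) ≤ Fintype.card V := Nat.cast_nonneg _
  have inter := card_add_card_sub_card_le_card_inter (V := V)
  have sdiff := card_sub_le_card_sdiff (α := V)
  refine mul_le_card_sigma _ _ ?_
    (mul_nonneg (by linarith) (mul_nonneg (by linarith) (by linarith))) fun a _ => ?_
  · have : (#{v} : ℝ) = 1 := by simp
    linarith [hout v, sdiff (outNbhd A v) {v}]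
  refine mul_le_card_sigma _ _ ?_ (mul_nonneg (by linarith) (by linarith)) fun b _ => ?_
  · have : (#{v, a} : ℝ) ≤ 2 := by exact_mod_cast card_le_two
    linarith [hout a, hin v, inter (outNbhd A a) (inNbhd A v),
      sdiff (outNbhd A a ∩ inNbhd A v) {v, a}]
  refine mul_le_card_sigma _ _ ?_ (by linarith) fun c _ => ?_
  · have : (#{v, a, b} : ℝ) ≤ 3 := by exact_mod_cast card_le_three
    linarith [hout b, hin a, hout v, inter (outNbhd A b) (inNbhd A a),
      inter (outNbhd A b ∩ inNbhd A a) (outNbhd A v),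
      sdiff (outNbhd A b ∩ inNbhd A a ∩ outNbhd A v) {v, a, b}]
  · have : (#{v, a, b, c} : ℝ) ≤ 4 := by exact_mod_cast card_le_four
    linarith [hout c, hin b, hin v, inter (outNbhd A c) (inNbhd A b),
      inter (outNbhd A c ∩ inNbhd A b) (inNbhd A v),
      sdiff (outNbhd A c ∩ inNbhd A b ∩ inNbhd A v) {v, a, b, c}]

end ReverseSquarePath

open ReverseSquarePath in
theorem stmt_4_general (V : Type*) [Fintype V] [DecidableEq V] (A : V → V → Prop) [DecidableRel A]
    (γ : ℝ) (hγ1 : γ ≤ 1/18)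
    (hn : (2 : ℝ) ≤ γ * (Fintype.card V : ℝ))
    (hdeg : ∀ v : V,
      (2/3 + γ) * (Fintype.card V : ℝ) ≤
        min ((Finset.univ.filter (fun u => A v u)).card : ℝ)
            ((Finset.univ.filter (fun u => A u v)).card : ℝ)) :
    ∀ v : V,
      6 * γ^3 * (Fintype.card V : ℝ)^4 ≤
        ((Finset.univ.filter (fun t : V × V × V × V =>
          let a := t.1; let b := t.2.1; let c := t.2.2.1; let d := t.2.2.2
          a ≠ b ∧ a ≠ c ∧ a ≠ d ∧ b ≠ c ∧ b ≠ d ∧ c ≠ d ∧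
          v ≠ a ∧ v ≠ b ∧ v ≠ c ∧ v ≠ d ∧
          A a b ∧ A b c ∧ A c d ∧ A c a ∧ A d b ∧
          A v a ∧ A v c ∧ A b v ∧ A d v)).card : ℝ) := by
  intro v
  set n : ℝ := (Fintype.card V : ℝ)
  have hout (u : V) : (2/3 + γ) * n ≤ #(outNbhd A u) := (le_min_iff.1 (hdeg u)).1
  have hin (u : V) : (2/3 + γ) * n ≤ #(inNbhd A u) := (le_min_iff.1 (hdeg u)).2
  have hcount := le_card_absorberCandidates A hout hin (by linarith) v
  have habs : (#(absorberCandidates A v) : ℝ) ≤ #(univ.filter (IsAbsorber A v)) := by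
    exact_mod_cast card_absorberCandidates_le A v
  have hγn : 0 ≤ γ * n := by linarith
  calc 6 * γ ^ 3 * n ^ 4 ≤ (2/3 * n) * (n/3 * (3/2 * (γ * n) * (γ * n))) := by
        nlinarith [mul_nonneg (sq_nonneg (γ * n)) (sq_nonneg n)]
    _ ≤ _ := by gcongr <;> linarith
    _ ≤ _ := hcount.trans habs

/-- In a digraph on `n` vertices with minimum semi-degree at least
`(2/3 + γ)n`, `0 < γ ≤ 1/18` and `γn ≥ 2`, every vertex `v` has at least
`6γ³n⁴` absorbers, counted as ordered 4-tuples `(a,b,c,d)` of distinct vertices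
(also distinct from `v`) with arcs `ab, bc, cd, ca, db` and `va, vc, bv, dv`. -/
theorem stmt_4 (V : Type*) [Fintype V] [DecidableEq V] (A : V → V → Prop) [DecidableRel A]
    (γ : ℝ) (hγ0 : 0 < γ) (hγ1 : γ ≤ 1/18)
    (hn : (2 : ℝ) ≤ γ * (Fintype.card V : ℝ))
    (hdeg : ∀ v : V,
      (2/3 + γ) * (Fintype.card V : ℝ) ≤
        min ((Finset.univ.filter (fun u => A v u)).card : ℝ)
            ((Finset.univ.filter (fun u => A u v)).card : ℝ)) :
    ∀ v : V,
      6 * γ^3 * (Fintype.card V : ℝ)^4 ≤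
        ((Finset.univ.filter (fun t : V × V × V × V =>
          let a := t.1; let b := t.2.1; let c := t.2.2.1; let d := t.2.2.2
          a ≠ b ∧ a ≠ c ∧ a ≠ d ∧ b ≠ c ∧ b ≠ d ∧ c ≠ d ∧
          v ≠ a ∧ v ≠ b ∧ v ≠ c ∧ v ≠ d ∧
          A a b ∧ A b c ∧ A c d ∧ A c a ∧ A d b ∧
          A v a ∧ A v c ∧ A b v ∧ A d v)).card : ℝ) :=
  stmt_4_general V A γ hγ1 hn hdeg
end

section
/- Let γ > 0, let j₀ = ⌈1/γ⌉ + 1, and suppose a sequence of positive reals x₁, x₂, …, x_{j₀} satisfies x₁ ≥ (1/3 + 2γ)n and x_{j+1} ≥ ((1+6γ)/(1+3γ))·x_j − C·n^{3/4} for all j, where C is an absolute constant. Then for n sufficiently large, x_{j₀} > n. -/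
/-!
Unrolling `x (j+1) ≥ r x j - B` gives `x (1+k) ≥ r^k x 1 - B (1 + r + ⋯ + r^(k-1))`. With
`r = (1+6γ)/(1+3γ) = 1 + 3γ/(1+3γ)` and `k = ⌈1/γ⌉`, Bernoulli's inequality gives
`r^k ≥ 1 + 3/(1+3γ)`, so `r^k (1/3 + 2γ) = 1 + ε` with `ε > 0`. The error term is a constant
times `n^(3/4) = o(n)`, hence eventually below `ε n`.
-/

open Filter Finset

theorem le_of_forall_mul_sub_le {r B : ℝ} (hr : 0 ≤ r) {x : ℕ → ℝ}
    (h : ∀ j, r * x j - B ≤ x (j + 1)) (a m : ℕ) :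
    r ^ m * x a - B * ∑ i ∈ range m, r ^ i ≤ x (a + m) := by
  induction m with
  | zero => simp
  | succ m ih =>
    calc r ^ (m + 1) * x a - B * ∑ i ∈ range (m + 1), r ^ i
        = r * (r ^ m * x a - B * ∑ i ∈ range m, r ^ i) - B := by
          rw [geom_sum_succ]; ring
      _ ≤ r * x (a + m) - B := by gcongr
      _ ≤ x (a + (m + 1)) := h (a + m)

theorem one_lt_pow_ceil_inv_mul {γ : ℝ} (hγ : 0 < γ) :
    1 < ((1 + 6 * γ) / (1 + 3 * γ)) ^ ⌈1 / γ⌉₊ * (1 / 3 + 2 * γ) := by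
  have hratio : (1 + 6 * γ) / (1 + 3 * γ) = 1 + 3 * γ / (1 + 3 * γ) := by
    field_simp; ring
  have hstep : 0 ≤ 3 * γ / (1 + 3 * γ) := by positivity
  have hbernoulli : 1 + 3 / (1 + 3 * γ) ≤ ((1 + 6 * γ) / (1 + 3 * γ)) ^ ⌈1 / γ⌉₊ :=
    calc 1 + 3 / (1 + 3 * γ) = 1 + 1 / γ * (3 * γ / (1 + 3 * γ)) := by field_simp
      _ ≤ 1 + ⌈1 / γ⌉₊ * (3 * γ / (1 + 3 * γ)) := by gcongr; exact Nat.le_ceil _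
      _ ≤ _ := hratio ▸ one_add_mul_le_pow (by linarith) _
  calc 1 < (1 + 3 / (1 + 3 * γ)) * (1 / 3 + 2 * γ) := by
        rw [← sub_pos]; field_simp; nlinarith
    _ ≤ _ := by gcongr

theorem eventually_mul_rpow_lt_mul (M : ℝ) {ε p : ℝ} (hε : 0 < ε) (hp : p < 1) :
    ∀ᶠ t : ℝ in atTop, M * t ^ p < ε * t := by
  have hlim : Tendsto (fun t : ℝ => M * t ^ (p - 1)) atTop (nhds 0) := by
    simpa [neg_sub] using (tendsto_rpow_neg_atTop (sub_pos.2 hp)).const_mul M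
  filter_upwards [hlim.eventually (gt_mem_nhds hε), eventually_gt_atTop 0] with t ht htpos
  calc M * t ^ p = M * t ^ (p - 1) * t := by
        rw [mul_assoc, ← Real.rpow_add_one htpos.ne', sub_add_cancel]
    _ < ε * t := mul_lt_mul_of_pos_right ht htpos

/-- Cascade growth estimate. If `γ > 0`, `j₀ = ⌈1/γ⌉ + 1`, and a
sequence of positive reals satisfies `x 1 ≥ (1/3 + 2γ)n` and
`x (j+1) ≥ ((1+6γ)/(1+3γ))·x j − C·n^(3/4)`, then for `n` sufficiently large,
`x j₀ > n`. -/
theorem stmt_7 (γ : ℝ) (hγ : 0 < γ) (C : ℝ) :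
    ∃ n₀ : ℕ, ∀ n : ℕ, n₀ ≤ n → ∀ x : ℕ → ℝ,
      (∀ j, 0 < x j) →
      (1/3 + 2*γ) * (n : ℝ) ≤ x 1 →
      (∀ j : ℕ, ((1 + 6*γ)/(1 + 3*γ)) * x j - C * (n : ℝ) ^ ((3:ℝ)/4) ≤ x (j+1)) →
      (n : ℝ) < x (⌈1/γ⌉₊ + 1) := by
  set r := (1 + 6 * γ) / (1 + 3 * γ)
  set k := ⌈1 / γ⌉₊
  have hr : 0 ≤ r := by positivity
  have hε : 0 < r ^ k * (1 / 3 + 2 * γ) - 1 := sub_pos.2 (one_lt_pow_ceil_inv_mul hγ)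
  obtain ⟨n₀, hn₀⟩ := eventually_atTop.1 <| tendsto_natCast_atTop_atTop.eventually <|
    eventually_mul_rpow_lt_mul (C * ∑ i ∈ range k, r ^ i) hε (by norm_num : (3 : ℝ) / 4 < 1)
  refine ⟨n₀, fun n hn x _ hx1 hrec => ?_⟩
  have hunrolled := le_of_forall_mul_sub_le hr hrec 1 k
  have herror := hn₀ n hn
  have hstart : r ^ k * ((1 / 3 + 2 * γ) * n) ≤ r ^ k * x 1 := by gcongr
  rw [add_comm]
  linarith
end

section
/- For every k ≥ 1 there exists a digraph D on n = 3k vertices with minimum semi-degree δ⁰(D) = 2k − 1 = 2n/3 − 1 that contains no k pairwise vertex-disjoint directed 3-cycles (cyclic triangles). -/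
/-!
Take a set `X` of `2k - 1` vertices and let `u → v` whenever `u ≠ v` and at least one of `u, v`
lies in `X`. A vertex outside `X` has exactly `X` as out- and in-neighbourhood, a vertex of `X`
sees everything else, so the minimum semi-degree is `|X| = 2k - 1`. The vertices outside `X` are
pairwise non-adjacent, so every cyclic triangle has at least two vertices in `X`, and `k` disjoint
ones would need `2k > |X|` vertices of `X`.
-/

open Finset Function

theorem Finset.mul_card_le_card_of_pairwise_disjoint {α ι : Type*} [DecidableEq α] [Fintype ι]
    {T : ι → Finset α} (hT : Pairwise (Disjoint on T)) {X : Finset α} {n : ℕ}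
    (hn : ∀ i, n ≤ #(T i ∩ X)) : n * Fintype.card ι ≤ #X :=
  calc n * Fintype.card ι = ∑ _i : ι, n := by simp [mul_comm]
    _ ≤ ∑ i, #(T i ∩ X) := sum_le_sum fun i _ => hn i
    _ = #(univ.biUnion fun i => T i ∩ X) :=
      (card_biUnion fun i _ j _ hij => (hT hij).mono inter_subset_left inter_subset_left).symm
    _ ≤ #X := card_le_card (biUnion_subset.2 fun _ _ => inter_subset_right)

namespace SplitDigraph

variable {V : Type*} {X : Finset V} {u v : V}

def Adj (X : Finset V) (u v : V) : Prop := u ≠ v ∧ (u ∈ X ∨ v ∈ X)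

theorem adj_comm : Adj X u v ↔ Adj X v u := by
  unfold Adj; tauto

theorem filter_adj [Fintype V] [DecidableEq V] (v : V) [DecidablePred (Adj X v)] :
    univ.filter (Adj X v) = if v ∈ X then univ.erase v else X := by
  ext u
  split_ifs <;> simp only [Adj, mem_filter, mem_univ, mem_erase, true_and] <;> grind

theorem filter_adj_right [Fintype V] (v : V) [DecidablePred (Adj X · v)]
    [DecidablePred (Adj X v)] :
    univ.filter (Adj X · v) = univ.filter (Adj X v) :=
  filter_congr fun _ _ => adj_comm

theorem card_filter_adj [Fintype V] [DecidableEq V] (v : V) [DecidablePred (Adj X v)] :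
    #(univ.filter (Adj X v)) = if v ∈ X then Fintype.card V - 1 else #X := by
  rw [filter_adj]
  split_ifs <;> simp

theorem card_le_card_filter_adj [Fintype V] [DecidableEq V] (hX : #X < Fintype.card V) (v : V)
    [DecidablePred (Adj X v)] :
    #X ≤ #(univ.filter (Adj X v)) := by
  rw [card_filter_adj]
  split_ifs <;> omega

theorem card_sdiff_le_one_of_adj [DecidableEq V] {T : Finset V}
    (hT : ∀ x ∈ T, ∀ y ∈ T, x ≠ y → Adj X x y) :
    #(T \ X) ≤ 1 :=
  card_le_one.2 fun x hx y hy => by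
    by_contra hxy
    simp only [mem_sdiff] at hx hy
    rcases (hT x hx.1 y hy.1 hxy).2 with h | h
    exacts [hx.2 h, hy.2 h]

theorem two_le_card_inter_of_cyclic [DecidableEq V] {a b c : V} (hab : Adj X a b)
    (hbc : Adj X b c) (hca : Adj X c a) : 2 ≤ #({a, b, c} ∩ X) := by
  have hT : ∀ x ∈ ({a, b, c} : Finset V), ∀ y ∈ ({a, b, c} : Finset V), x ≠ y →
      Adj X x y := by
    simp only [mem_insert, mem_singleton]
    rintro x (rfl | rfl | rfl) y (rfl | rfl | rfl) hxy <;>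
      first | exact absurd rfl hxy | assumption | exact adj_comm.1 ‹_›
  have hcard : #({a, b, c} : Finset V) = 3 :=
    card_eq_three.2 ⟨a, b, c, hab.1, hca.1.symm, hbc.1, rfl⟩
  have := card_sdiff_add_card_inter {a, b, c} X
  have := card_sdiff_le_one_of_adj hT
  omega

end SplitDigraph

open scoped Classical in
/-- For every `k ≥ 1` there is a loopless digraph on `n = 3k` vertices
whose minimum semi-degree equals `2k − 1 = 2n/3 − 1` which contains no `k` pairwise
vertex-disjoint cyclic triangles. -/
theorem stmt_11 (k : ℕ) (hk : 1 ≤ k) :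
    ∃ A : Fin (3*k) → Fin (3*k) → Prop,
      (∀ v, ¬ A v v) ∧
      (∀ v : Fin (3*k),
        2*k - 1 ≤ min (Finset.univ.filter (fun u => A v u)).card
                      (Finset.univ.filter (fun u => A u v)).card) ∧
      (∃ v : Fin (3*k),
        min (Finset.univ.filter (fun u => A v u)).card
            (Finset.univ.filter (fun u => A u v)).card = 2*k - 1) ∧
      ¬ ∃ f : Fin k → Fin (3*k) × Fin (3*k) × Fin (3*k),
        (∀ i, A (f i).1 (f i).2.1 ∧ A (f i).2.1 (f i).2.2 ∧ A (f i).2.2 (f i).1) ∧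
        (∀ i, (f i).1 ≠ (f i).2.1 ∧ (f i).1 ≠ (f i).2.2 ∧ (f i).2.1 ≠ (f i).2.2) ∧
        (∀ i j, i ≠ j →
          Disjoint ({(f i).1, (f i).2.1, (f i).2.2} : Finset (Fin (3*k)))
                   ({(f j).1, (f j).2.1, (f j).2.2} : Finset (Fin (3*k)))) := by
  open SplitDigraph in
  set X : Finset (Fin (3*k)) := Iio ⟨2*k - 1, by omega⟩
  have hX : #X = 2*k - 1 := Fin.card_Iio _
  have hXlt : #X < Fintype.card (Fin (3*k)) := by simp only [hX, Fintype.card_fin]; omega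
  obtain ⟨y, -, hy⟩ := exists_mem_notMem_of_card_lt_card hXlt
  refine ⟨Adj X, fun v h => h.1 rfl, fun v => ?_, ⟨y, ?_⟩, ?_⟩
  · rw [filter_adj_right, min_self, ← hX]
    exact card_le_card_filter_adj hXlt v
  · rw [filter_adj_right, min_self, card_filter_adj, if_neg hy, hX]
  · rintro ⟨f, hcyc, -, hdisj⟩
    have := mul_card_le_card_of_pairwise_disjoint hdisj
      fun i => two_le_card_inter_of_cyclic (hcyc i).1 (hcyc i).2.1 (hcyc i).2.2
    rw [Fintype.card_fin, hX] at this
    omega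
end

section
/- Let D be a digraph on n vertices with δ⁰(D) ≥ (2/3 + γ)n for 0 < γ ≤ 1/6, and let W ⊆ V(D) with |W| ≤ γn/4. Then for n sufficiently large there exists a set R ⊆ V(D) \ W with |R| = ⌈γ⁷n/2⌉ such that every vertex x ∈ V(D) satisfies |N⁺(x) ∩ R| ≥ (2/3 + γ/2)(|R| + 4) and |N⁻(x) ∩ R| ≥ (2/3 + γ/2)(|R| + 4). -/
/-! Choose `R` uniformly among the `r`-subsets of `U = V \ W`. For a vertex `x`, let `B` be the
set of its out-non-neighbours (or in-non-neighbours) in `U`; then `|B| ≤ (1/3 - γ)n`, and `R` fails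
at `x` only if `|R ∩ B| > θ = r - (2/3 + γ/2)(r + 4)`. Sorting the `r`-subsets by their intersection
with `B` bounds the exponential moment: `r! · Σ_R λ^|R ∩ B| ≤ (|U| + (λ - 1)|B|)^r`. Markov's
inequality with `λ = 1 + γ/2` and a union bound over the `2n` events leave fewer bad sets than the
at least `(|U| - r)^r / r!` sets in total: the ratio `(|U| + γ|B|/2) / (|U| - r)` is at most
`exp(γ/6 - 11γ²/25)`, while `λ^θ ≥ exp(r(γ/6 - γ²/3) - 1/4)`, and the gap `exp(8γ²r/75)` exceeds
`2n` for large `n` since `r ≥ γ⁷n/2`. -/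

open Finset Filter Real

lemma choose_mul_choose_mul_factorial_le {b c r j : ℕ} (hj : j ≤ r) :
    b.choose j * c.choose (r - j) * r.factorial ≤ r.choose j * b ^ j * c ^ (r - j) := by
  have hb : b.choose j * j.factorial ≤ b ^ j := by
    rw [mul_comm, ← Nat.descFactorial_eq_factorial_mul_choose]; exact Nat.descFactorial_le_pow _ _
  have hc : c.choose (r - j) * (r - j).factorial ≤ c ^ (r - j) := by
    rw [mul_comm, ← Nat.descFactorial_eq_factorial_mul_choose]; exact Nat.descFactorial_le_pow _ _
  calc b.choose j * c.choose (r - j) * r.factorial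
      = r.choose j * (b.choose j * j.factorial) * (c.choose (r - j) * (r - j).factorial) := by
        rw [← Nat.choose_mul_factorial_mul_factorial hj]; ring
    _ ≤ r.choose j * b ^ j * c ^ (r - j) := by gcongr

section Sampling

variable {α : Type*} [DecidableEq α]

lemma card_filter_card_inter_eq_le (U B : Finset α) (r j : ℕ) :
    #{R ∈ U.powersetCard r | #(R ∩ B) = j} ≤ (#B).choose j * (#(U \ B)).choose (r - j) := by
  rw [← card_powersetCard, ← card_powersetCard, ← card_product]
  refine card_le_card_of_injOn (fun R => (R ∩ B, R \ B)) ?_ ?_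
  · intro R hR
    simp only [coe_filter, mem_powersetCard, Set.mem_ofPred_eq] at hR
    obtain ⟨⟨hRU, hRr⟩, hj⟩ := hR
    have hsplit := card_sdiff_add_card_inter R B
    simp only [coe_product, Set.mem_prod, mem_coe, mem_powersetCard]
    exact ⟨⟨inter_subset_right, hj⟩, sdiff_subset_sdiff hRU le_rfl, by omega⟩
  · intro R₁ _ R₂ _ h
    simp only [Prod.mk.injEq] at h
    rw [← sdiff_union_inter R₁ B, ← sdiff_union_inter R₂ B, h.1, h.2]

lemma sum_powersetCard_pow_card_inter_mul_factorial_le (U B : Finset α) (r : ℕ) {t : ℝ}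
    (ht : 0 ≤ t) :
    (∑ R ∈ U.powersetCard r, t ^ #(R ∩ B)) * r.factorial ≤ (t * #B + #(U \ B)) ^ r := by
  have hmaps : ∀ R ∈ U.powersetCard r, #(R ∩ B) ∈ range (r + 1) := fun R hR =>
    mem_range_succ_iff.mpr ((card_le_card inter_subset_left).trans (mem_powersetCard.mp hR).2.le)
  calc (∑ R ∈ U.powersetCard r, t ^ #(R ∩ B)) * r.factorial
      = ∑ j ∈ range (r + 1),
          (#{R ∈ U.powersetCard r | #(R ∩ B) = j} : ℝ) * r.factorial * t ^ j := by
        rw [← sum_fiberwise_of_maps_to' hmaps, sum_mul]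
        simp only [sum_const, nsmul_eq_mul]
        exact sum_congr rfl fun j _ => by ring
    _ ≤ ∑ j ∈ range (r + 1),
          (((#B).choose j * (#(U \ B)).choose (r - j) * r.factorial : ℕ) : ℝ) * t ^ j := by
        gcongr with j
        push_cast
        gcongr
        exact_mod_cast card_filter_card_inter_eq_le U B r j
    _ ≤ ∑ j ∈ range (r + 1), ((r.choose j * #B ^ j * #(U \ B) ^ (r - j) : ℕ) : ℝ) * t ^ j := by
        refine sum_le_sum fun j hj => mul_le_mul_of_nonneg_right ?_ (by positivity)
        exact_mod_cast choose_mul_choose_mul_factorial_le (mem_range_succ_iff.mp hj)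
    _ = (t * #B + #(U \ B)) ^ r := by
        rw [add_pow]
        refine sum_congr rfl fun j _ => ?_
        push_cast
        ring

lemma card_filter_lt_card_inter_mul_le (U B : Finset α) (hBU : B ⊆ U) (r : ℕ) {s : ℝ}
    (hs : 0 ≤ s) (θ : ℝ) :
    (#{R ∈ U.powersetCard r | θ < #(R ∩ B)} : ℝ) * (1 + s) ^ θ * r.factorial ≤
      (#U + s * #B) ^ r := by
  have hmarkov : (#{R ∈ U.powersetCard r | θ < #(R ∩ B)} : ℝ) * (1 + s) ^ θ ≤
      ∑ R ∈ U.powersetCard r, (1 + s) ^ #(R ∩ B) := by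
    rw [← nsmul_eq_mul]
    refine (card_nsmul_le_sum _ _ _ fun R hR => ?_).trans
      (sum_le_sum_of_subset_of_nonneg (filter_subset _ _) fun _ _ _ => by positivity)
    rw [← Real.rpow_natCast]
    exact Real.rpow_le_rpow_of_exponent_le (by linarith) (mem_filter.mp hR).2.le
  have hsplit : ((#(U \ B) + #B : ℕ) : ℝ) = #U := by rw [card_sdiff_add_card_eq_card hBU]
  push_cast at hsplit
  calc (#{R ∈ U.powersetCard r | θ < #(R ∩ B)} : ℝ) * (1 + s) ^ θ * r.factorial
      ≤ (∑ R ∈ U.powersetCard r, (1 + s) ^ #(R ∩ B)) * r.factorial := by gcongr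
    _ ≤ ((1 + s) * #B + #(U \ B)) ^ r :=
        sum_powersetCard_pow_card_inter_mul_factorial_le U B r (by linarith)
    _ = (#U + s * #B) ^ r := by rw [← hsplit]; ring

lemma sub_pow_le_choose_mul_factorial {m r : ℕ} (hr : r ≤ m) :
    ((m : ℝ) - r) ^ r ≤ m.choose r * r.factorial := by
  have h : (m - r) ^ r ≤ m.choose r * r.factorial :=
    calc (m - r) ^ r ≤ (m + 1 - r) ^ r := Nat.pow_le_pow_left (by omega) r
      _ ≤ m.descFactorial r := Nat.pow_sub_le_descFactorial m r
      _ = m.choose r * r.factorial := by rw [Nat.descFactorial_eq_factorial_mul_choose, mul_comm]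
  rw [← Nat.cast_sub hr]
  exact_mod_cast h

lemma exists_mem_forall_not_of_sum_card_filter_lt {β ι : Type*} [Fintype ι] (T : Finset β)
    (P : ι → β → Prop) [∀ i, DecidablePred (P i)] (h : ∑ i, #{x ∈ T | P i x} < #T) :
    ∃ x ∈ T, ∀ i, ¬ P i x := by
  classical
  by_contra! hall
  refine h.not_ge ((card_le_card fun x hx => ?_).trans card_biUnion_le)
  obtain ⟨i, hi⟩ := hall x hx
  exact mem_biUnion.mpr ⟨i, mem_univ i, mem_filter.mpr ⟨hx, hi⟩⟩

lemma exists_subset_card_eq_forall_card_inter_le {ι : Type*} [Fintype ι] (U : Finset α)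
    (B : ι → Finset α) (hBU : ∀ i, B i ⊆ U) {r : ℕ} (hr : r ≤ #U) {s θ b : ℝ} (hs : 0 ≤ s)
    (hB : ∀ i, #(B i) ≤ b)
    (hcount : Fintype.card ι * (#U + s * b) ^ r < (1 + s) ^ θ * (#U - r) ^ r) :
    ∃ R ⊆ U, #R = r ∧ ∀ i, #(R ∩ B i) ≤ θ := by
  have hweight : 0 < (1 + s) ^ θ * r.factorial := by positivity
  have hlt : ∑ i, #{R ∈ U.powersetCard r | θ < #(R ∩ B i)} < #(U.powersetCard r) := by
    rw [← Nat.cast_lt (α := ℝ), ← mul_lt_mul_iff_of_pos_right hweight]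
    calc ((∑ i, #{R ∈ U.powersetCard r | θ < #(R ∩ B i)} : ℕ) : ℝ) * ((1 + s) ^ θ * r.factorial)
        = ∑ i, (#{R ∈ U.powersetCard r | θ < #(R ∩ B i)} : ℝ) * (1 + s) ^ θ * r.factorial := by
          push_cast; rw [sum_mul]; exact sum_congr rfl fun i _ => by ring
      _ ≤ ∑ _i : ι, (#U + s * b) ^ r := sum_le_sum fun i _ =>
          (card_filter_lt_card_inter_mul_le U (B i) (hBU i) r hs θ).trans (by gcongr; exact hB i)
      _ < (1 + s) ^ θ * (#U - r) ^ r := by simpa using hcount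
      _ ≤ (1 + s) ^ θ * ((#U).choose r * r.factorial) := by
          gcongr; exact sub_pow_le_choose_mul_factorial hr
      _ = (#(U.powersetCard r) : ℝ) * ((1 + s) ^ θ * r.factorial) := by
          rw [card_powersetCard]; ring
  obtain ⟨R, hR, hgood⟩ := exists_mem_forall_not_of_sum_card_filter_lt _ _ hlt
  obtain ⟨hRU, hRr⟩ := mem_powersetCard.mp hR
  exact ⟨R, hRU, hRr, fun i => not_lt.mp (hgood i)⟩

lemma sub_le_card_filter_of_card_inter_filter_not_le {R U : Finset α} (hRU : R ⊆ U)
    (p : α → Prop) [DecidablePred p] {θ : ℝ} (h : #(R ∩ {y ∈ U | ¬ p y}) ≤ θ) :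
    #R - θ ≤ #{y ∈ R | p y} := by
  rw [inter_filter, inter_eq_left.mpr hRU] at h
  have := card_filter_add_card_filter_not (s := R) p
  rw [← Nat.cast_inj (R := ℝ), Nat.cast_add] at this
  linarith

end Sampling

lemma card_filter_not_le_card_sub {V : Type*} [Fintype V] (U : Finset V) (p : V → Prop)
    [DecidablePred p] : (#{y ∈ U | ¬ p y} : ℝ) ≤ Fintype.card V - #{y | p y} := by
  have hsub : (#{y ∈ U | ¬ p y} : ℝ) ≤ #{y | ¬ p y} := by
    exact_mod_cast card_le_card (filter_subset_filter _ (subset_univ U))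
  have hsplit := card_filter_add_card_filter_not (s := univ) p
  rw [card_univ, ← Nat.cast_inj (R := ℝ), Nat.cast_add] at hsplit
  linarith

lemma exists_subset_card_eq_forall_card_filter_ge {V : Type*} [Fintype V] [DecidableEq V]
    (A : V → V → Prop) [DecidableRel A] (U : Finset V) {r : ℕ} (hr : r ≤ #U) {s θ b : ℝ}
    (hs : 0 ≤ s)
    (hdeg : ∀ v, Fintype.card V - b ≤ min (#{u | A v u} : ℝ) #{u | A u v})
    (hcount : 2 * Fintype.card V * (#U + s * b) ^ r < (1 + s) ^ θ * (#U - r) ^ r) :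
    ∃ R ⊆ U, #R = r ∧ ∀ x, #R - θ ≤ #{y ∈ R | A x y} ∧ #R - θ ≤ #{y ∈ R | A y x} := by
  let B : V ⊕ V → Finset V := Sum.elim (fun x => {y ∈ U | ¬ A x y}) (fun x => {y ∈ U | ¬ A y x})
  have hBU : ∀ i, B i ⊆ U := by rintro (x | x) <;> exact filter_subset _ _
  have hB : ∀ i, #(B i) ≤ b := by
    rintro (x | x) <;> refine (card_filter_not_le_card_sub U _).trans ?_
    · linarith [hdeg x, min_le_left (#{u | A x u} : ℝ) #{u | A u x}]
    · linarith [hdeg x, min_le_right (#{u | A x u} : ℝ) #{u | A u x}]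
  obtain ⟨R, hRU, hRr, hR⟩ := exists_subset_card_eq_forall_card_inter_le U B hBU hr hs hB
    (by simpa [two_mul] using hcount)
  exact ⟨R, hRU, hRr, fun x => ⟨sub_le_card_filter_of_card_inter_filter_not_le hRU _ (hR (.inl x)),
    sub_le_card_filter_of_card_inter_filter_not_le hRU _ (hR (.inr x))⟩⟩

section Numerics

variable {γ : ℝ}

lemma pow_le_pow_mul_exp_of_le_mul_one_add {a b κ : ℝ} (ha : 0 ≤ a) (hb : 0 ≤ b)
    (h : a ≤ b * (1 + κ)) (r : ℕ) : a ^ r ≤ b ^ r * exp (r * κ) := by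
  have hexp : a ≤ b * exp κ := h.trans (by gcongr; linarith [add_one_le_exp κ])
  calc a ^ r ≤ (b * exp κ) ^ r := pow_le_pow_left₀ ha hexp r
    _ = b ^ r * exp (r * κ) := by rw [mul_pow, exp_nat_mul]

lemma reservoir_poly_le (hγ0 : 0 < γ) (hγ1 : γ ≤ 1/6) :
    γ^7 + γ/6 - γ^2/2 ≤ (1 - γ/4 - γ^7) * (γ/6 - 11/25 * γ^2) := by
  have h5 : γ^5 ≤ (1/6)^5 := pow_le_pow_left₀ hγ0.le hγ1 5
  nlinarith [pow_nonneg hγ0.le 5, pow_nonneg hγ0.le 7, pow_nonneg hγ0.le 2,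
    mul_le_mul_of_nonneg_left h5 (pow_nonneg hγ0.le 2),
    mul_le_mul_of_nonneg_left h5 (pow_nonneg hγ0.le 3),
    mul_le_mul_of_nonneg_left h5 (pow_nonneg hγ0.le 4)]

lemma reservoir_base_le (hγ0 : 0 < γ) (hγ1 : γ ≤ 1/6) {n m r : ℝ} (hn : 0 ≤ n)
    (hm : (1 - γ/4) * n ≤ m) (hr : r ≤ γ^7 * n) :
    m + γ/2 * ((1/3 - γ) * n) ≤ (m - r) * (1 + (γ/6 - 11/25 * γ^2)) := by
  have hκ : 0 ≤ γ/6 - 11/25 * γ^2 := by nlinarith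
  have hmr : (1 - γ/4 - γ^7) * n ≤ m - r := by linarith
  nlinarith [mul_le_mul_of_nonneg_right hmr hκ,
    mul_le_mul_of_nonneg_right (reservoir_poly_le hγ0 hγ1) hn]

lemma reservoir_exponent_ge (hγ0 : 0 < γ) (hγ1 : γ ≤ 1/6) {r : ℝ} (hr : 0 ≤ r) :
    r * (γ/6 - γ^2/3) - 1/4 ≤ log (1 + γ/2) * (r - (2/3 + γ/2) * (r + 4)) := by
  have hupper : log (1 + γ/2) ≤ γ/2 := by
    linarith [log_le_sub_one_of_pos (by linarith : 0 < 1 + γ/2)]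
  have hlower : γ/2 - γ^2/8 ≤ log (1 + γ/2) := by
    refine le_trans ?_ (le_log_one_add_of_nonneg (by linarith : 0 ≤ γ/2))
    rw [le_div_iff₀ (by linarith)]
    nlinarith [pow_nonneg hγ0.le 3]
  have hθ : 0 ≤ (1/3 - γ/2) * r := mul_nonneg (by linarith) hr
  calc r * (γ/6 - γ^2/3) - 1/4
      ≤ (γ/2 - γ^2/8) * ((1/3 - γ/2) * r) - γ/2 * (8/3 + 2 * γ) := by
        nlinarith [mul_nonneg (sq_nonneg γ) hr, mul_nonneg (pow_nonneg hγ0.le 3) hr]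
    _ ≤ log (1 + γ/2) * ((1/3 - γ/2) * r) - log (1 + γ/2) * (8/3 + 2 * γ) := by
        gcongr
    _ = log (1 + γ/2) * (r - (2/3 + γ/2) * (r + 4)) := by ring

lemma reservoir_count_lt (hγ0 : 0 < γ) (hγ1 : γ ≤ 1/6) {n m : ℝ} {r : ℕ} (hn : 0 < n)
    (hlog : log (2 * n) + 1/4 < 4/75 * γ^9 * n) (hm : (1 - γ/4) * n ≤ m)
    (hr1 : γ^7 * n / 2 ≤ r) (hr2 : r ≤ γ^7 * n) :
    2 * n * (m + γ/2 * ((1/3 - γ) * n)) ^ r <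
      (1 + γ/2) ^ ((r : ℝ) - (2/3 + γ/2) * (r + 4)) * (m - r) ^ r := by
  have hγ7 : γ^7 ≤ 1/2 := by nlinarith [pow_le_pow_left₀ hγ0.le hγ1 7]
  have hmr : 0 < m - r := by nlinarith
  have hpow := pow_le_pow_mul_exp_of_le_mul_one_add (by nlinarith) hmr.le
    (reservoir_base_le hγ0 hγ1 hn.le hm hr2) r
  -- the exponents differ by `(11/25 - 1/3) γ² r = 8γ²r/75 ≥ 4γ⁹n/75`, which absorbs `log (2n)`
  have hexp : 2 * n * exp (r * (γ/6 - 11/25 * γ^2)) <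
      (1 + γ/2) ^ ((r : ℝ) - (2/3 + γ/2) * (r + 4)) := by
    rw [rpow_def_of_pos (by linarith), ← exp_log (by positivity : 0 < 2 * n), ← exp_add]
    refine exp_lt_exp.mpr ?_
    linarith [reservoir_exponent_ge hγ0 hγ1 r.cast_nonneg,
      mul_le_mul_of_nonneg_left hr1 (sq_nonneg γ)]
  calc 2 * n * (m + γ/2 * ((1/3 - γ) * n)) ^ r
      ≤ 2 * n * ((m - r) ^ r * exp (r * (γ/6 - 11/25 * γ^2))) := by gcongr
    _ = 2 * n * exp (r * (γ/6 - 11/25 * γ^2)) * (m - r) ^ r := by ring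
    _ < _ := by gcongr

lemma eventually_log_two_mul_add_lt {c : ℝ} (hc : 0 < c) (d : ℝ) :
    ∀ᶠ x : ℝ in atTop, log (2 * x) + d < c * x := by
  have hlog := (isLittleO_log_id_atTop.comp_tendsto (tendsto_id.const_mul_atTop two_pos)).bound
    (by positivity : 0 < c / 4)
  filter_upwards [hlog, eventually_gt_atTop (2 * d / c), eventually_ge_atTop 0] with x hx hd hx0
  simp only [Function.comp_apply, id, norm_eq_abs, abs_of_nonneg (by positivity : 0 ≤ 2 * x)]
    at hx
  rw [div_lt_iff₀ hc] at hd
  linarith [le_abs_self (log (2 * x))]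

end Numerics

/-- Reservoir Lemma: For `0 < γ ≤ 1/6` and `n` sufficiently large,
every digraph on `n` vertices with minimum semi-degree at least `(2/3 + γ)n` and
every `W` with `|W| ≤ γn/4` admits a reservoir `R ⊆ V \ W` with `|R| = ⌈γ⁷n/2⌉`
such that every vertex has at least `(2/3 + γ/2)(|R|+4)` out- and in-neighbours in `R`. -/
theorem stmt_12 (γ : ℝ) (hγ0 : 0 < γ) (hγ1 : γ ≤ 1/6) :
    ∃ n₀ : ℕ, ∀ (V : Type) [Fintype V] [DecidableEq V] (A : V → V → Prop) [DecidableRel A],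
      n₀ ≤ Fintype.card V →
      (∀ v : V,
        (2/3 + γ) * (Fintype.card V : ℝ) ≤
          min ((Finset.univ.filter (fun u => A v u)).card : ℝ)
              ((Finset.univ.filter (fun u => A u v)).card : ℝ)) →
      ∀ W : Finset V, (W.card : ℝ) ≤ γ * (Fintype.card V : ℝ) / 4 →
      ∃ R : Finset V, Disjoint R W ∧ R.card = ⌈γ^7 * (Fintype.card V : ℝ) / 2⌉₊ ∧
        ∀ x : V,
          (2/3 + γ/2) * ((R.card : ℝ) + 4) ≤ ((R.filter (fun y => A x y)).card : ℝ) ∧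
          (2/3 + γ/2) * ((R.card : ℝ) + 4) ≤ ((R.filter (fun y => A y x)).card : ℝ) := by
  obtain ⟨n₀, hn₀⟩ := eventually_atTop.mp <| tendsto_natCast_atTop_atTop.eventually <|
    (eventually_ge_atTop (2 / γ^7)).and
      (eventually_log_two_mul_add_lt (by positivity : (0 : ℝ) < 4/75 * γ^9) (1/4))
  refine ⟨n₀, fun V _ _ A _ hcard hdeg W hW => ?_⟩
  obtain ⟨hlarge, hlog⟩ := hn₀ _ hcard
  set n := Fintype.card V
  rw [div_le_iff₀ (by positivity)] at hlarge
  have hγ7 : γ^7 ≤ 1/2 := by nlinarith [pow_le_pow_left₀ hγ0.le hγ1 7]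
  set r := ⌈γ^7 * n / 2⌉₊
  have hr1 : γ^7 * n / 2 ≤ r := Nat.le_ceil _
  have hr2 : (r : ℝ) ≤ γ^7 * n := by
    linarith [Nat.ceil_lt_add_one (by positivity : 0 ≤ γ^7 * n / 2)]
  have hU : (1 - γ/4) * n ≤ #(univ \ W) := by
    rw [card_sdiff_of_subset (subset_univ W), card_univ, Nat.cast_sub (card_le_univ W)]
    linarith
  have hrU : r ≤ #(univ \ W) := by exact_mod_cast (show (r : ℝ) ≤ #(univ \ W) by nlinarith)
  obtain ⟨R, hRU, hRr, hR⟩ := exists_subset_card_eq_forall_card_filter_ge A (univ \ W) hrU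
    (b := (1/3 - γ) * n) (by positivity) (fun v => by linarith [hdeg v])
    (reservoir_count_lt hγ0 hγ1 (by nlinarith) hlog hU hr1 hr2)
  have hθ : (#R : ℝ) - (r - (2/3 + γ/2) * (r + 4)) = (2/3 + γ/2) * (#R + 4) := by rw [hRr]; ring
  exact ⟨R, disjoint_of_subset_left hRU sdiff_disjoint, hRr, fun x => hθ ▸ hR x⟩
end

section
/- Let R be a digraph (the reduced digraph) obtained from applying the degree form of the Diregularity lemma with parameters ε, d to a digraph D. Then δ⁰(R) ≥ (δ⁰(D)/|D| − d − 2ε)·|R|. -/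
open Finset
open scoped Classical
open Function

/-
Pick a vertex `x` of the cluster `V_i`. Its `D'`-out-neighbours avoid `V_i` and lie in `V₀` or in
clusters `V_j` with `ij ∈ R`, so `δ - (d + ε)n < d⁺_{D'}(x) ≤ εn + d⁺_R(i)·m`. Since the clusters
are disjoint, `km ≤ n`, and dividing `δ - (d + 2ε)n ≤ d⁺_R(i)·m` by `m` gives the bound.
In-degrees follow by reversing all arcs.
-/

theorem Finset.card_le_card_add_card_mul {α ι : Type*} {N V₀ : Finset α} {Vp : ι → Finset α}
    {S : Finset ι} {m : ℕ} (hm : ∀ j ∈ S, #(Vp j) ≤ m)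
    (hcover : ∀ y ∈ N, y ∈ V₀ ∨ ∃ j ∈ S, y ∈ Vp j) :
    #N ≤ #V₀ + #S * m :=
  calc #N ≤ #(V₀ ∪ S.biUnion Vp) := card_le_card fun y hy => by simpa using hcover y hy
    _ ≤ #V₀ + #(S.biUnion Vp) := card_union_le _ _
    _ ≤ #V₀ + #S * m := by gcongr; exact card_biUnion_le_card_mul _ _ _ hm

theorem Finset.card_mul_le_card_of_pairwise_disjoint {α ι : Type*} [Fintype α] [Fintype ι]
    {Vp : ι → Finset α} {m : ℕ} (hdisj : Pairwise (Disjoint on Vp)) (hm : ∀ i, #(Vp i) = m) :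
    Fintype.card ι * m ≤ Fintype.card α :=
  calc Fintype.card ι * m = ∑ i, #(Vp i) := by simp [hm]
    _ = #(univ.biUnion Vp) := (card_biUnion fun i _ j _ hij => hdisj hij).symm
    _ ≤ Fintype.card α := card_le_univ _

theorem div_sub_mul_le_of_sub_mul_le {δ c n k m r : ℝ} (hn : 0 < n) (hk : 0 ≤ k) (hm : 0 ≤ m)
    (hr : 0 ≤ r) (h : δ - c * n ≤ r * m) (hkm : k * m ≤ n) : (δ / n - c) * k ≤ r := by
  rcases le_or_gt (δ / n - c) 0 with hc | hc
  · nlinarith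
  have hcn : (δ / n - c) * n = δ - c * n := by field_simp
  rcases hm.eq_or_lt with rfl | hm
  · nlinarith
  refine le_of_mul_le_mul_right ?_ hm
  calc (δ / n - c) * k * m ≤ (δ / n - c) * n := by rw [mul_assoc]; gcongr
    _ ≤ r * m := by rw [hcn]; exact h

section ReducedDigraph

variable {V ι : Type*} [Fintype V] [Fintype ι] (A : V → V → Prop) [DecidableRel A]
  (R : ι → ι → Prop) {ε d δ : ℝ} {m : ℕ} {V₀ : Finset V} {Vp : ι → Finset V}

theorem sub_mul_le_card_reduced_out_mul (hn : 0 < Fintype.card V)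
    (hpart : ∀ x, x ∈ V₀ ∨ ∃ i, x ∈ Vp i) (hV₀ : (#V₀ : ℝ) ≤ ε * Fintype.card V)
    (hm : ∀ i, #(Vp i) = m) (hempty : ∀ i, ∀ x ∈ Vp i, ∀ y ∈ Vp i, ¬ A x y)
    (hdeg : ∀ v, δ - (d + ε) * Fintype.card V ≤ #{u | A v u})
    (hR : ∀ i j, i ≠ j → ∀ x ∈ Vp i, ∀ y ∈ Vp j, A x y → R i j) (i : ι) :
    δ - (d + 2 * ε) * Fintype.card V ≤ #{j | R i j} * m := by
  obtain ⟨x, hcover⟩ : ∃ x, ∀ y, A x y → y ∈ V₀ ∨ ∃ j, R i j ∧ y ∈ Vp j := by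
    rcases (Vp i).eq_empty_or_nonempty with hi | ⟨x, hx⟩
    · have hVp : ∀ j, Vp j = ∅ := fun j => card_eq_zero.mp (by rw [hm, ← hm i, hi, card_empty])
      obtain ⟨x⟩ := Fintype.card_pos_iff.mp hn
      exact ⟨x, fun y _ => (hpart y).imp_right fun ⟨j, hy⟩ => by simp [hVp j] at hy⟩
    · refine ⟨x, fun y hxy => (hpart y).imp_right fun ⟨j, hy⟩ => ⟨j, ?_, hy⟩⟩
      refine hR i j ?_ x hx y hy hxy
      rintro rfl
      exact hempty i x hx y hy hxy
  have hcard : #{u | A x u} ≤ #V₀ + #{j | R i j} * m :=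
    card_le_card_add_card_mul (fun j _ => (hm j).le) fun y hy => by
      simpa using hcover y (by simpa using hy)
  have hcard' : (#{u | A x u} : ℝ) ≤ #V₀ + #{j | R i j} * m := by exact_mod_cast hcard
  linarith [hdeg x]

theorem le_card_reduced_out (hε : 0 ≤ ε) (hd : 0 ≤ d)
    (hpart : ∀ x, x ∈ V₀ ∨ ∃ i, x ∈ Vp i) (hdisj : Pairwise (Disjoint on Vp))
    (hV₀ : (#V₀ : ℝ) ≤ ε * Fintype.card V)
    (hm : ∀ i, #(Vp i) = m) (hempty : ∀ i, ∀ x ∈ Vp i, ∀ y ∈ Vp i, ¬ A x y)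
    (hdeg : ∀ v, δ - (d + ε) * Fintype.card V ≤ #{u | A v u})
    (hR : ∀ i j, i ≠ j → ∀ x ∈ Vp i, ∀ y ∈ Vp j, A x y → R i j) (i : ι) :
    (δ / Fintype.card V - d - 2 * ε) * Fintype.card ι ≤ #{j | R i j} := by
  rcases (Fintype.card V).eq_zero_or_pos with hn | hn
  · simp only [hn, Nat.cast_zero, div_zero, zero_sub]
    nlinarith [(#{j | R i j}).cast_nonneg (α := ℝ), (Fintype.card ι).cast_nonneg (α := ℝ)]
  have hkm : (Fintype.card ι * m : ℝ) ≤ Fintype.card V := by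
    exact_mod_cast card_mul_le_card_of_pairwise_disjoint hdisj hm
  calc (δ / Fintype.card V - d - 2 * ε) * Fintype.card ι
      = (δ / Fintype.card V - (d + 2 * ε)) * Fintype.card ι := by ring
    _ ≤ #{j | R i j} := div_sub_mul_le_of_sub_mul_le (by exact_mod_cast hn) (by positivity)
        (by positivity) (by positivity)
        (sub_mul_le_card_reduced_out_mul A R hn hpart hV₀ hm hempty hdeg hR i) hkm

end ReducedDigraph

theorem stmt_17_general (V : Type*) [Fintype V]
    (D D' : V → V → Prop) [DecidableRel D] [DecidableRel D']
    (ε d δ : ℝ) (hε : 0 ≤ ε) (hd : 0 ≤ d)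
    (k m : ℕ) (V₀ : Finset V) (Vp : Fin k → Finset V)
    (hpart : ∀ x : V, x ∈ V₀ ∨ ∃ i, x ∈ Vp i)
    (hdisj : ∀ i j, i ≠ j → Disjoint (Vp i) (Vp j))
    (hV₀ : (V₀.card : ℝ) ≤ ε * (Fintype.card V : ℝ))
    (hm : ∀ i, (Vp i).card = m)
    (hempty : ∀ i, ∀ x ∈ Vp i, ∀ y ∈ Vp i, ¬ D' x y)
    (hdeg : ∀ v : V,
      δ ≤ min ((Finset.univ.filter (fun u => D v u)).card : ℝ)
              ((Finset.univ.filter (fun u => D u v)).card : ℝ))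
    (hdeg' : ∀ x : V,
      ((Finset.univ.filter (fun u => D x u)).card : ℝ) - (d + ε) * (Fintype.card V : ℝ) <
        ((Finset.univ.filter (fun u => D' x u)).card : ℝ) ∧
      ((Finset.univ.filter (fun u => D u x)).card : ℝ) - (d + ε) * (Fintype.card V : ℝ) <
        ((Finset.univ.filter (fun u => D' u x)).card : ℝ))
    (R : Fin k → Fin k → Prop)
    (hR : ∀ i j, R i j ↔ i ≠ j ∧ ∃ x ∈ Vp i, ∃ y ∈ Vp j, D' x y) :
    ∀ i : Fin k,
      (δ / (Fintype.card V : ℝ) - d - 2*ε) * (k : ℝ) ≤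
        ((Finset.univ.filter (fun j => R i j)).card : ℝ) ∧
      (δ / (Fintype.card V : ℝ) - d - 2*ε) * (k : ℝ) ≤
        ((Finset.univ.filter (fun j => R j i)).card : ℝ) := by
  intro i
  have hout (v : V) : δ - (d + ε) * Fintype.card V ≤ #{u | D' v u} := by
    linarith [(hdeg v).trans (min_le_left _ _), (hdeg' v).1]
  have hin (v : V) : δ - (d + ε) * Fintype.card V ≤ #{u | D' u v} := by
    linarith [(hdeg v).trans (min_le_right _ _), (hdeg' v).2]
  constructor
  · simpa using le_card_reduced_out D' R hε hd hpart hdisj hV₀ hm hempty hout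
      (fun i j hij x hx y hy hxy => (hR i j).2 ⟨hij, x, hx, y, hy, hxy⟩) i
  · simpa using le_card_reduced_out (fun x y => D' y x) (fun i j => R j i) hε hd hpart hdisj hV₀
      hm (fun i x hx y hy => hempty i y hy x hx) hin
      (fun i j hij x hx y hy hxy => (hR j i).2 ⟨hij.symm, y, hy, x, hx, hxy⟩) i

/-- Minimum semi-degree of the reduced digraph. Suppose `D` is a digraph
on `n` vertices, `V₀, V₁, …, V_k` is a partition of the vertices with `|V₀| ≤ εn` and
`|V_i| = m` for `i ∈ [k]`, and `D'` is a spanning subdigraph of `D` with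
`d⁺_{D'}(x) > d⁺_D(x) − (d+ε)n`, `d⁻_{D'}(x) > d⁻_D(x) − (d+ε)n` for all `x`, and
`D'[V_i]` empty. Let `R` be the reduced digraph on `[k]`, where `ij` is an arc iff
`i ≠ j` and there is a `V_i–V_j` edge in `D'`. If `δ` is a lower bound for the minimum
semi-degree of `D`, then every vertex of `R` has out- and in-degree at least
`(δ/n − d − 2ε)·k`. -/
theorem stmt_17 (V : Type*) [Fintype V] [DecidableEq V]
    (D D' : V → V → Prop) [DecidableRel D] [DecidableRel D']
    (ε d δ : ℝ) (hε : 0 ≤ ε) (hd : 0 ≤ d)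
    (k m : ℕ) (V₀ : Finset V) (Vp : Fin k → Finset V)
    (hsub : ∀ x y, D' x y → D x y)
    (hpart : ∀ x : V, x ∈ V₀ ∨ ∃ i, x ∈ Vp i)
    (hdisj : ∀ i j, i ≠ j → Disjoint (Vp i) (Vp j))
    (hdisj0 : ∀ i, Disjoint V₀ (Vp i))
    (hV₀ : (V₀.card : ℝ) ≤ ε * (Fintype.card V : ℝ))
    (hm : ∀ i, (Vp i).card = m)
    (hempty : ∀ i, ∀ x ∈ Vp i, ∀ y ∈ Vp i, ¬ D' x y)
    (hdeg : ∀ v : V,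
      δ ≤ min ((Finset.univ.filter (fun u => D v u)).card : ℝ)
              ((Finset.univ.filter (fun u => D u v)).card : ℝ))
    (hdeg' : ∀ x : V,
      ((Finset.univ.filter (fun u => D x u)).card : ℝ) - (d + ε) * (Fintype.card V : ℝ) <
        ((Finset.univ.filter (fun u => D' x u)).card : ℝ) ∧
      ((Finset.univ.filter (fun u => D u x)).card : ℝ) - (d + ε) * (Fintype.card V : ℝ) <
        ((Finset.univ.filter (fun u => D' u x)).card : ℝ))
    (R : Fin k → Fin k → Prop)
    (hR : ∀ i j, R i j ↔ i ≠ j ∧ ∃ x ∈ Vp i, ∃ y ∈ Vp j, D' x y) :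
    ∀ i : Fin k,
      (δ / (Fintype.card V : ℝ) - d - 2*ε) * (k : ℝ) ≤
        ((Finset.univ.filter (fun j => R i j)).card : ℝ) ∧
      (δ / (Fintype.card V : ℝ) - d - 2*ε) * (k : ℝ) ≤
        ((Finset.univ.filter (fun j => R j i)).card : ℝ) :=
  stmt_17_general V D D' ε d δ hε hd k m V₀ Vp hpart hdisj hV₀ hm hempty hdeg hdeg' R hR
end
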